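/- Let A, B, C be symmetric sequences of length n with entries in {±1}. If PSD_A(s) + PSD_B(s) + PSD_C(s) > 4n for some integer s, then there does not exist a sequence D such that A, B, C, D form a Williamson sequence. -/

import Mathlib

/-- The periodic autocorrelation function of the length-`n` sequence `a`. -/
def paf (n : ℕ) (a : ℕ → ℤ) (s : ℕ) : ℤ :=
  ∑ k ∈ Finset.range n, a k * a ((k + s) % n)

/-- `a` is a symmetric sequence of length `n`: `aᵢ = a_{n-i}` for `1 ≤ i < n`. -/
def SymmSeq (n : ℕ) (a : ℕ → ℤ) : Prop := ∀ i, 1 ≤ i → i < n → a i = a (n - i)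

/-- All entries of the length-`n` sequence `a` are `±1`. -/
def PMOne (n : ℕ) (a : ℕ → ℤ) : Prop := ∀ i < n, a i = 1 ∨ a i = -1

/-- `a,b,c,d` are Williamson sequences of order `n`. -/
def IsWilliamson (n : ℕ) (a b c d : ℕ → ℤ) : Prop :=
  SymmSeq n a ∧ SymmSeq n b ∧ SymmSeq n c ∧ SymmSeq n d ∧
  PMOne n a ∧ PMOne n b ∧ PMOne n c ∧ PMOne n d ∧
  ∀ s, 1 ≤ s → s ≤ n / 2 → paf n a s + paf n b s + paf n c s + paf n d s = 0

/-- The discrete Fourier transform of the length-`n` sequence `a`. -/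
noncomputable def dft (n : ℕ) (a : ℕ → ℤ) (s : ℤ) : ℂ :=
  ∑ k ∈ Finset.range n, (a k : ℂ) * Complex.exp (2 * Real.pi * Complex.I * k * s / n)

/-- The power spectral density of the length-`n` sequence `a`. -/
noncomputable def psd (n : ℕ) (a : ℕ → ℤ) (s : ℤ) : ℝ :=
  ‖dft n a s‖ ^ 2

/-!
By the Wiener–Khinchin identity `PSD_X(s) = ∑_{t<n} PAF_X(t) ω^{ts}` (`ω = exp(2πi/n)`), and
`PAF_X(n - t) = PAF_X(t)` extends the Williamson condition to all `0 < t < n`. Summing over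
`A, B, C, D` only the `t = 0` term survives, and `PAF_X(0) = n` for a `±1` sequence, so the four
PSDs add up to `4n` at every `s`; as `PSD_D(s) ≥ 0`, the other three cannot exceed `4n`.
-/

open Finset ComplexConjugate

lemma Finset.sum_range_add_mod {M : Type*} [AddCommMonoid M] (n k : ℕ) (f : ℕ → M) :
    ∑ t ∈ range n, f ((k + t) % n) = ∑ t ∈ range n, f t := by
  rcases Nat.eq_zero_or_pos n with rfl | hn
  · simp
  have : NeZero n := ⟨hn.ne'⟩
  rw [← Fin.sum_univ_eq_sum_range, ← Fin.sum_univ_eq_sum_range]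
  exact Fintype.sum_equiv (Equiv.addLeft (Fin.ofNat n k)) _ _ fun t => by
    simp [Fin.val_add]

lemma paf_zero {n : ℕ} {a : ℕ → ℤ} (ha : PMOne n a) : paf n a 0 = n := by
  have hsq : ∀ k ∈ range n, a k * a ((k + 0) % n) = 1 := fun k hk => by
    rw [Nat.add_zero, Nat.mod_eq_of_lt (mem_range.1 hk)]
    rcases ha k (mem_range.1 hk) with h | h <;> simp [h]
  rw [paf, sum_congr rfl hsq]
  simp

lemma paf_sub_eq {n t : ℕ} (a : ℕ → ℤ) (ht : t ≤ n) : paf n a (n - t) = paf n a t := by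
  rw [paf, ← sum_range_add_mod n t]
  refine sum_congr rfl fun j hj => ?_
  rw [Nat.mod_add_mod, show t + j + (n - t) = j + n by omega, Nat.add_mod_right,
    Nat.mod_eq_of_lt (mem_range.1 hj), mul_comm, add_comm]

theorem sum_paf_mul_eq_norm_sq {n : ℕ} (a : ℕ → ℤ) (ψ : AddChar (ZMod n) Circle) :
    ∑ t ∈ range n, (paf n a t : ℂ) * ψ t = ‖∑ k ∈ range n, (a k : ℂ) * ψ k‖ ^ 2 := by
  set S := ∑ k ∈ range n, (a k : ℂ) * ψ k
  have hshift (k t : ℕ) : (ψ t : ℂ) = conj (ψ k : ℂ) * ψ ((k + t) % n : ℕ) := by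
    rw [← Circle.coe_inv_eq_conj, ← AddChar.map_neg_eq_inv, ← Circle.coe_mul,
      ← AddChar.map_add_eq_mul, ZMod.natCast_mod]
    push_cast
    ring_nf
  calc ∑ t ∈ range n, (paf n a t : ℂ) * ψ t
      = ∑ k ∈ range n, (a k : ℂ) * conj (ψ k : ℂ) *
          ∑ t ∈ range n, (a ((k + t) % n) : ℂ) * ψ ((k + t) % n : ℕ) := by
        simp only [paf, Int.cast_sum, Int.cast_mul, sum_mul, mul_sum]
        rw [sum_comm]
        refine sum_congr rfl fun k _ => sum_congr rfl fun t _ => ?_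
        rw [hshift k t]
        ring
    _ = conj S * S := by
        simp only [sum_range_add_mod n _ (fun m => (a m : ℂ) * ψ m), ← sum_mul, S, map_sum,
          map_mul, map_intCast]
    _ = ‖S‖ ^ 2 := Complex.conj_mul' S

lemma dft_eq_sum_toCircle {n : ℕ} [NeZero n] (a : ℕ → ℤ) (s : ℤ) :
    dft n a s = ∑ k ∈ range n, (a k : ℂ) * (ZMod.toCircle.mulShift (s : ZMod n) k : ℂ) := by
  refine sum_congr rfl fun k _ => ?_
  rw [AddChar.mulShift_apply, ← Int.cast_natCast (R := ZMod n), ← Int.cast_mul,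
    ZMod.toCircle_intCast]
  push_cast
  ring_nf

lemma psd_eq_sum_paf_mul {n : ℕ} [NeZero n] (a : ℕ → ℤ) (s : ℤ) :
    (psd n a s : ℂ) = ∑ t ∈ range n, (paf n a t : ℂ) * ZMod.toCircle.mulShift (s : ZMod n) t := by
  rw [sum_paf_mul_eq_norm_sq, psd, dft_eq_sum_toCircle, Complex.ofReal_pow]

namespace IsWilliamson

variable {n : ℕ} {a b c d : ℕ → ℤ}

lemma paf_add_paf_add_paf_add_paf_eq_zero (h : IsWilliamson n a b c d) {t : ℕ} (ht0 : 0 < t)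
    (htn : t < n) : paf n a t + paf n b t + paf n c t + paf n d t = 0 := by
  obtain ⟨-, -, -, -, -, -, -, -, hpaf⟩ := h
  rcases le_or_gt t (n / 2) with hle | hgt
  · exact hpaf t ht0 hle
  · rw [← paf_sub_eq a htn.le, ← paf_sub_eq b htn.le, ← paf_sub_eq c htn.le,
      ← paf_sub_eq d htn.le]
    exact hpaf (n - t) (by omega) (by omega)

theorem psd_add_psd_add_psd_add_psd (h : IsWilliamson n a b c d) (s : ℤ) :
    psd n a s + psd n b s + psd n c s + psd n d s = 4 * n := by
  rcases Nat.eq_zero_or_pos n with rfl | hn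
  · simp [psd, dft]
  have : NeZero n := ⟨hn.ne'⟩
  apply Complex.ofReal_injective
  push_cast
  simp only [psd_eq_sum_paf_mul, ← sum_add_distrib, ← add_mul, ← Int.cast_add]
  rw [sum_eq_single_of_mem 0 (mem_range.2 hn) fun t ht ht0 => by
    simp [h.paf_add_paf_add_paf_add_paf_eq_zero (Nat.pos_of_ne_zero ht0) (mem_range.1 ht)]]
  obtain ⟨-, -, -, -, ha, hb, hc, hd, -⟩ := h
  simp [paf_zero ha, paf_zero hb, paf_zero hc, paf_zero hd]
  ring

end IsWilliamson

theorem psd_test_three_general (n : ℕ) (a b c : ℕ → ℤ)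
    (s : ℤ) (hs : psd n a s + psd n b s + psd n c s > 4 * n) :
    ¬ ∃ d : ℕ → ℤ, IsWilliamson n a b c d := by
  rintro ⟨d, hw⟩
  have hd : 0 ≤ psd n d s := sq_nonneg _
  linarith [hw.psd_add_psd_add_psd_add_psd s]

theorem psd_test_three (n : ℕ) (a b c : ℕ → ℤ)
    (hsa : SymmSeq n a) (hsb : SymmSeq n b) (hsc : SymmSeq n c)
    (hpa : PMOne n a) (hpb : PMOne n b) (hpc : PMOne n c)
    (s : ℤ) (hs : psd n a s + psd n b s + psd n c s > 4 * n) :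
    ¬ ∃ d : ℕ → ℤ, IsWilliamson n a b c d :=
  psd_test_three_general n a b c s hs
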